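/- arXiv:1606.00250 — 2 statements merged into one kernel-verified Lean document; each statement's English description precedes it below -/
import Mathlib

section
/- For any even integer ν ≥ 2 and λ > 0, the Poisson central moments satisfy λ (d/dλ) μ_ν(λ) ≤ ⌊ν/2⌋ μ_ν(λ), and consequently μ_{ν+1}(λ) ≤ (νλ + ⌊ν/2⌋) μ_ν(λ). -/
open Real

/-- The `ν`-th central moment of a Poisson random variable with mean `lam`. -/
noncomputable def poissonCentralMoment (ν : ℕ) (lam : ℝ) : ℝ :=
  ∑' k : ℕ, (Real.exp (-lam) * lam ^ k / Nat.factorial k) * ((k : ℝ) - lam) ^ ν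

set_option maxHeartbeats 1000000 in

lemma pois_summable (lam : ℝ) (ν : ℕ) :
    Summable (fun k : ℕ => Real.exp (-lam) * lam ^ k / (Nat.factorial k) * ((k : ℝ) - lam) ^ ν) := by
  have hhalf : Summable (fun k : ℕ => ((k:ℝ) + 1) ^ ν * (1/2 : ℝ) ^ k) := by
    have h := summable_pow_mul_geometric_of_norm_lt_one (R := ℝ) ν (r := 1/2) (by norm_num)
    have h2 : Summable (fun k : ℕ => ((k+1 : ℕ):ℝ) ^ ν * (1/2 : ℝ) ^ (k+1)) :=
      (summable_nat_add_iff 1).2 h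
    have := h2.mul_left (2 : ℝ)
    refine this.congr fun k => ?_
    push_cast
    ring
  apply Summable.of_norm
  refine Summable.of_nonneg_of_le (fun k => norm_nonneg _)
    (fun k => ?_) ((hhalf.mul_left (Real.exp (-lam) * Real.exp (2*|lam|) * (1+|lam|)^ν)))
  have hk0 : (0:ℝ) ≤ (k:ℝ) := Nat.cast_nonneg k
  have hfac : (0:ℝ) < (Nat.factorial k : ℝ) := by exact_mod_cast Nat.factorial_pos k
  rw [Real.norm_eq_abs, abs_mul, abs_div]
  have h1 : |lam ^ k| / |(Nat.factorial k : ℝ)| ≤ Real.exp (2*|lam|) * (1/2)^k := by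
    rw [abs_pow, abs_of_pos hfac]
    rw [div_le_iff₀ hfac]
    have key : (2*|lam|)^k / (Nat.factorial k : ℝ) ≤ Real.exp (2*|lam|) := by
      have h2 := Real.sum_le_exp_of_nonneg (x := 2*|lam|) (by positivity) (k+1)
      refine le_trans ?_ h2
      have := Finset.single_le_sum (f := fun i => (2*|lam|)^i / (Nat.factorial i : ℝ))
        (fun i _ => by positivity) (Finset.mem_range.2 (Nat.lt_succ_self k))
      simpa using this
    have : |lam|^k = (2*|lam|)^k * (1/2)^k := by
      rw [← mul_pow]; ring_nf
    rw [this]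
    calc (2*|lam|)^k * (1/2)^k ≤ (Real.exp (2*|lam|) * (Nat.factorial k : ℝ)) * (1/2)^k := by
          apply mul_le_mul_of_nonneg_right _ (by positivity)
          rw [div_le_iff₀ hfac] at key; exact key
      _ = Real.exp (2*|lam|) * (1/2)^k * (Nat.factorial k : ℝ) := by ring
  have h2 : |((k:ℝ) - lam) ^ ν| ≤ ((1+|lam|)^ν * ((k:ℝ)+1)^ν) := by
    rw [abs_pow, ← mul_pow]
    apply pow_le_pow_left₀ (abs_nonneg _)
    calc |(k:ℝ) - lam| ≤ (k:ℝ) + |lam| := by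
          refine le_trans (abs_sub _ _) ?_
          simp [abs_of_nonneg hk0]
      _ ≤ (1+|lam|) * ((k:ℝ)+1) := by nlinarith [abs_nonneg lam]
  rw [abs_mul]
  rw [abs_of_pos (Real.exp_pos _), mul_div_assoc]
  calc Real.exp (-lam) * (|lam ^ k| / |(Nat.factorial k : ℝ)|) * |((k:ℝ) - lam) ^ ν|
      ≤ Real.exp (-lam) * (Real.exp (2*|lam|) * (1/2)^k) * ((1+|lam|)^ν * ((k:ℝ)+1)^ν) := by
        apply mul_le_mul (mul_le_mul_of_nonneg_left h1 (Real.exp_pos _).le) h2 (abs_nonneg _)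
        positivity
    _ = Real.exp (-lam) * Real.exp (2*|lam|) * (1+|lam|)^ν * (((k:ℝ)+1)^ν * (1/2)^k) := by ring

lemma pcm_zero (lam : ℝ) : poissonCentralMoment 0 lam = 1 := by
  unfold poissonCentralMoment
  have h : ∀ k : ℕ, Real.exp (-lam) * lam ^ k / (Nat.factorial k) * ((k : ℝ) - lam) ^ 0
      = Real.exp (-lam) * (lam ^ k / (Nat.factorial k)) := by
    intro k; rw [pow_zero, mul_one, mul_div_assoc]
  rw [tsum_congr h, tsum_mul_left]
  have hexp : ∑' k : ℕ, lam ^ k / (Nat.factorial k : ℝ) = Real.exp lam := by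
    rw [Real.exp_eq_exp_ℝ, NormedSpace.exp_eq_tsum_div]
  rw [hexp, ← Real.exp_add]
  simp

lemma pcm_rec (ν : ℕ) (lam : ℝ) :
    poissonCentralMoment (ν + 1) lam
      = lam * ∑ m ∈ Finset.range ν, (ν.choose m : ℝ) * poissonCentralMoment m lam := by
  set w : ℕ → ℝ := fun k => Real.exp (-lam) * lam ^ k / (Nat.factorial k) with hw
  set f : ℕ → ℕ → ℝ := fun m k => w k * ((k : ℝ) - lam) ^ m with hf
  have hsum : ∀ m, Summable (f m) := fun m => pois_summable lam m
  set g : ℕ → ℝ := fun k => (k : ℝ) * w k * ((k : ℝ) - lam) ^ ν with hg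
  have hgf : ∀ k, g k = f (ν+1) k + lam * f ν k := by
    intro k; simp only [hg, hf, hw, pow_succ]; ring
  have hgsum : Summable g := by
    refine Summable.congr ((hsum (ν+1)).add ((hsum ν).mul_left lam)) fun k => (hgf k).symm
  have hsplit : poissonCentralMoment (ν+1) lam = (∑' k, g k) - lam * poissonCentralMoment ν lam := by
    unfold poissonCentralMoment
    rw [← tsum_mul_left]
    rw [← Summable.tsum_sub hgsum ((hsum ν).mul_left lam)]
    refine tsum_congr fun k => ?_
    rw [hgf k]; simp only [hf, hw]; ring
  have hg0 : g 0 = 0 := by simp [hg]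
  have hshift : (∑' k, g k) = ∑' k, g (k+1) := by
    rw [Summable.tsum_eq_zero_add hgsum, hg0, zero_add]
  have hgk : ∀ k : ℕ, g (k+1) = ∑ m ∈ Finset.range (ν+1), (lam * (ν.choose m : ℝ)) * f m k := by
    intro k
    have hkne : ((k:ℝ)+1) ≠ 0 := by positivity
    have hfacne : ((Nat.factorial k : ℕ):ℝ) ≠ 0 := by
      exact_mod_cast (Nat.factorial_pos k).ne'
    have h1 : g (k+1) = lam * w k * (((k:ℝ) - lam) + 1) ^ ν := by
      simp only [hg, hw, Nat.factorial_succ]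
      push_cast
      rw [show ((k:ℝ) - lam + 1) = ((k:ℝ) + 1 - lam) by ring]
      field_simp
      ring
    rw [h1, add_pow, Finset.mul_sum]
    refine Finset.sum_congr rfl fun m hm => ?_
    simp only [hf, one_pow]
    ring
  have hswap : (∑' k, g (k+1)) = ∑ m ∈ Finset.range (ν+1), (lam * (ν.choose m : ℝ)) * poissonCentralMoment m lam := by
    rw [tsum_congr hgk, Summable.tsum_finsetSum (fun m _ => (hsum m).mul_left _)]
    exact Finset.sum_congr rfl fun m _ => tsum_mul_left
  rw [hsplit, hshift, hswap, Finset.sum_range_succ]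
  simp only [Nat.choose_self, Nat.cast_one, mul_one]
  rw [add_sub_cancel_right, Finset.mul_sum]
  exact Finset.sum_congr rfl fun m _ => by ring


noncomputable def poissonP : ℕ → Polynomial ℝ
  | 0 => 1
  | (n+1) => Polynomial.X * ∑ m ∈ (Finset.range n).attach,
      Polynomial.C ((n.choose m.1 : ℕ) : ℝ) * poissonP m.1
  decreasing_by exact Nat.lt_succ_of_lt (Finset.mem_range.mp m.2)

lemma poissonP_succ (n : ℕ) : poissonP (n+1)
    = Polynomial.X * ∑ m ∈ Finset.range n, Polynomial.C ((n.choose m : ℕ) : ℝ) * poissonP m := by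
  rw [poissonP]
  congr 1
  exact Finset.sum_attach (Finset.range n) (fun m => Polynomial.C ((n.choose m : ℕ) : ℝ) * poissonP m)

lemma poissonP_zero : poissonP 0 = 1 := by rw [poissonP]

lemma poissonP_coeff_nonneg : ∀ ν l, 0 ≤ (poissonP ν).coeff l := by
  intro ν
  induction ν using Nat.strong_induction_on with
  | _ ν ih =>
    match ν with
    | 0 =>
      intro l
      rw [poissonP_zero, Polynomial.coeff_one]
      split_ifs <;> norm_num
    | (n+1) =>
      intro l
      rw [poissonP_succ]
      match l with
      | 0 => simp
      | (l+1) =>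
        rw [Polynomial.coeff_X_mul, Polynomial.finset_sum_coeff]
        refine Finset.sum_nonneg fun m hm => ?_
        rw [Polynomial.coeff_C_mul]
        exact mul_nonneg (Nat.cast_nonneg _) (ih m (Nat.lt_succ_of_lt (Finset.mem_range.mp hm)) l)

lemma poissonP_natDegree : ∀ ν, (poissonP ν).natDegree ≤ ν / 2 := by
  intro ν
  induction ν using Nat.strong_induction_on with
  | _ ν ih =>
    match ν with
    | 0 => simp [poissonP_zero]
    | 1 => simp [poissonP_succ]
    | (n+2) =>
      rw [poissonP_succ]
      refine le_trans (Polynomial.natDegree_mul_le) ?_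
      have hS : (∑ m ∈ Finset.range (n+1), Polynomial.C ((n+1).choose m : ℝ) * poissonP m).natDegree
          ≤ n / 2 := by
        refine Polynomial.natDegree_sum_le_of_forall_le _ _ fun m hm => ?_
        refine le_trans (Polynomial.natDegree_C_mul_le _ _) ?_
        have h1 := ih m (by have := Finset.mem_range.mp hm; omega : m < n + 2)
        have hm' : m ≤ n := by have := Finset.mem_range.mp hm; omega
        exact le_trans h1 (Nat.div_le_div_right hm')
      rw [Polynomial.natDegree_X]
      refine le_trans (Nat.add_le_add_left hS 1) (by omega)

lemma poly_eval_nonneg (p : Polynomial ℝ) (h : ∀ l, 0 ≤ p.coeff l) (x : ℝ) (hx : 0 ≤ x) :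
    0 ≤ p.eval x := by
  rw [Polynomial.eval_eq_sum_range]
  exact Finset.sum_nonneg fun i _ => mul_nonneg (h i) (pow_nonneg hx i)

lemma poly_deriv_bound (p : Polynomial ℝ) (d : ℕ) (hd : p.natDegree ≤ d)
    (h : ∀ l, 0 ≤ p.coeff l) (x : ℝ) (hx : 0 ≤ x) :
    x * (Polynomial.derivative p).eval x ≤ (d : ℝ) * p.eval x := by
  have hdd : (Polynomial.derivative p).natDegree < d + 1 :=
    lt_of_le_of_lt ((Polynomial.natDegree_derivative_le p).trans (Nat.sub_le _ _)) (by omega)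
  have h1 : (Polynomial.derivative p).eval x
      = ∑ i ∈ Finset.range (d+1), p.coeff (i+1) * ((i:ℝ)+1) * x ^ i := by
    rw [Polynomial.eval_eq_sum_range' hdd]
    exact Finset.sum_congr rfl fun i _ => by rw [Polynomial.coeff_derivative]
  have h2 : p.eval x = ∑ j ∈ Finset.range (d+2), p.coeff j * x ^ j :=
    Polynomial.eval_eq_sum_range' (by omega) x
  rw [h1, h2, Finset.mul_sum, Finset.mul_sum]
  have key : ∀ j ∈ Finset.range (d+2), (j:ℝ) * (p.coeff j * x ^ j) ≤ (d:ℝ) * (p.coeff j * x ^ j) := by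
    intro j hj
    by_cases hc : p.coeff j = 0
    · simp [hc]
    · have hjd : j ≤ d := le_trans (Polynomial.le_natDegree_of_ne_zero hc) hd
      exact mul_le_mul_of_nonneg_right (by exact_mod_cast hjd)
        (mul_nonneg (h j) (pow_nonneg hx j))
  calc ∑ i ∈ Finset.range (d+1), x * (p.coeff (i+1) * ((i:ℝ)+1) * x ^ i)
      = ∑ i ∈ Finset.range (d+1), ((i:ℝ)+1) * (p.coeff (i+1) * x ^ (i+1)) := by
        exact Finset.sum_congr rfl fun i _ => by ring
    _ ≤ ∑ i ∈ Finset.range (d+1), ((i:ℝ)+1) * (p.coeff (i+1) * x ^ (i+1)) + (0:ℝ) * (p.coeff 0 * x ^ 0) := by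
        simp
    _ = ∑ j ∈ Finset.range (d+2), (j:ℝ) * (p.coeff j * x ^ j) := by
        rw [Finset.sum_range_succ' (fun j => (j:ℝ) * (p.coeff j * x ^ j)) (d+1)]
        push_cast
        ring_nf
        exact Finset.sum_congr rfl fun i _ => by ring
    _ ≤ ∑ j ∈ Finset.range (d+2), (d:ℝ) * (p.coeff j * x ^ j) := Finset.sum_le_sum key


lemma pcm_eq (ν : ℕ) (lam : ℝ) : poissonCentralMoment ν lam = (poissonP ν).eval lam := by
  induction ν using Nat.strong_induction_on with
  | _ ν ih =>
    match ν with
    | 0 => rw [pcm_zero, poissonP_zero]; simp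
    | (n+1) =>
      rw [pcm_rec, poissonP_succ]
      rw [Polynomial.eval_mul, Polynomial.eval_X, Polynomial.eval_finset_sum]
      congr 1
      refine Finset.sum_congr rfl fun m hm => ?_
      rw [Polynomial.eval_mul, Polynomial.eval_C,
        ih m (Nat.lt_succ_of_lt (Finset.mem_range.mp hm))]

lemma pcm_nonneg (m : ℕ) (lam : ℝ) (hlam : 0 ≤ lam) : 0 ≤ poissonCentralMoment m lam := by
  rw [pcm_eq]
  exact poly_eval_nonneg _ (poissonP_coeff_nonneg m) lam hlam

lemma pcm_mono (n : ℕ) (lam : ℝ) (hlam : 0 ≤ lam) :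
    poissonCentralMoment (n+1) lam ≤ poissonCentralMoment (n+2) lam := by
  rw [pcm_rec, pcm_rec]
  refine mul_le_mul_of_nonneg_left ?_ hlam
  calc ∑ m ∈ Finset.range n, (n.choose m : ℝ) * poissonCentralMoment m lam
      ≤ ∑ m ∈ Finset.range n, ((n+1).choose m : ℝ) * poissonCentralMoment m lam := by
        refine Finset.sum_le_sum fun m _ => ?_
        exact mul_le_mul_of_nonneg_right
          (by exact_mod_cast Nat.choose_le_choose m (Nat.le_succ n)) (pcm_nonneg m lam hlam)
    _ ≤ ∑ m ∈ Finset.range (n+1), ((n+1).choose m : ℝ) * poissonCentralMoment m lam := by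
        refine Finset.sum_le_sum_of_subset_of_nonneg (Finset.range_subset_range.2 (Nat.le_succ n))
          fun m _ _ => mul_nonneg (Nat.cast_nonneg _) (pcm_nonneg m lam hlam)

/-- For even `ν ≥ 2` and `lam > 0`: `lam μ_ν'(lam) ≤ ⌊ν/2⌋ μ_ν(lam)`, and consequently
`μ_{ν+1}(lam) ≤ (ν lam + ⌊ν/2⌋) μ_ν(lam)`. -/
theorem poissonCentralMoment_deriv_bound (ν : ℕ) (hν : 2 ≤ ν) (heven : Even ν)
    (lam : ℝ) (hlam : 0 < lam) :
    lam * deriv (fun l => poissonCentralMoment ν l) lam ≤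
        ((ν / 2 : ℕ) : ℝ) * poissonCentralMoment ν lam ∧
      poissonCentralMoment (ν + 1) lam ≤
        ((ν : ℝ) * lam + ((ν / 2 : ℕ) : ℝ)) * poissonCentralMoment ν lam := by
  obtain ⟨n, hn⟩ : ∃ n, ν = n + 2 := ⟨ν - 2, by omega⟩
  subst hn
  have hhalf : (((n+2) / 2 : ℕ) : ℝ) = ((n+2 : ℕ) : ℝ) / 2 := by
    obtain ⟨c, hc⟩ := heven
    have : n + 2 = 2 * c := by omega
    rw [this]
    push_cast [Nat.mul_div_cancel_left c (by norm_num : 0 < 2)]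
    ring
  constructor
  · -- first inequality
    have hfun : (fun l => poissonCentralMoment (n+2) l) = fun l => (poissonP (n+2)).eval l :=
      funext fun l => pcm_eq (n+2) l
    rw [hfun, Polynomial.deriv, pcm_eq]
    exact poly_deriv_bound _ _ (poissonP_natDegree (n+2)) (poissonP_coeff_nonneg (n+2)) lam hlam.le
  · -- second inequality
    set E : ℕ → ℝ := fun m => poissonCentralMoment m lam with hE
    have hEnn : ∀ m, 0 ≤ E m := fun m => pcm_nonneg m lam hlam.le
    have hchoose : ∀ m ∈ Finset.range (n+1),
        ((n+2).choose m : ℝ) * E m ≤ (((n+2)/2 : ℕ) : ℝ) * (((n+1).choose m : ℝ) * E m) := by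
      intro m hm
      have hmn : m ≤ n := by have := Finset.mem_range.mp hm; omega
      have hid : (n+2) * ((n+1).choose m) = ((n+2).choose m) * (n+2-m) :=
        (Nat.add_one_mul_choose_eq (n+1) m).trans (Nat.choose_succ_right_eq (n+2) m)
      have hnat : 2 * ((n+2).choose m) ≤ (n+2) * ((n+1).choose m) := by
        rw [hid]
        calc 2 * ((n+2).choose m) ≤ (n+2-m) * ((n+2).choose m) :=
              Nat.mul_le_mul_right _ (by omega)
          _ = ((n+2).choose m) * (n+2-m) := mul_comm _ _
      have hreal : ((n+2).choose m : ℝ) ≤ ((n+2:ℕ) : ℝ) / 2 * ((n+1).choose m : ℝ) := by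
        rw [div_mul_eq_mul_div, le_div_iff₀ (by norm_num : (0:ℝ) < 2)]
        calc ((n+2).choose m : ℝ) * 2 = 2 * ((n+2).choose m : ℝ) := by ring
          _ ≤ ((n+2:ℕ) : ℝ) * ((n+1).choose m : ℝ) := by exact_mod_cast hnat
          _ = ((n+2:ℕ) : ℝ) * ((n+1).choose m : ℝ) := rfl
      rw [hhalf, ← mul_assoc]
      exact mul_le_mul_of_nonneg_right hreal (hEnn m)
    have hrec1 : E (n+3) = lam * ∑ m ∈ Finset.range (n+2), ((n+2).choose m : ℝ) * E m :=
      pcm_rec (n+2) lam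
    have hrec2 : E (n+2) = lam * ∑ m ∈ Finset.range (n+1), ((n+1).choose m : ℝ) * E m :=
      pcm_rec (n+1) lam
    have hsplit : ∑ m ∈ Finset.range (n+2), ((n+2).choose m : ℝ) * E m
        = (∑ m ∈ Finset.range (n+1), ((n+2).choose m : ℝ) * E m)
          + ((n+2).choose (n+1) : ℝ) * E (n+1) := Finset.sum_range_succ _ _
    have hch : ((n+2).choose (n+1) : ℝ) = ((n+2 : ℕ) : ℝ) := by
      exact_mod_cast congrArg Nat.cast (Nat.choose_succ_self_right (n+1))
    show E (n+2+1) ≤ (((n+2:ℕ) : ℝ) * lam + (((n+2)/2 : ℕ) : ℝ)) * E (n+2)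
    calc E (n+2+1) = lam * ((∑ m ∈ Finset.range (n+1), ((n+2).choose m : ℝ) * E m)
          + ((n+2).choose (n+1) : ℝ) * E (n+1)) := by rw [hrec1, hsplit]
      _ ≤ lam * ((∑ m ∈ Finset.range (n+1), (((n+2)/2 : ℕ) : ℝ) * (((n+1).choose m : ℝ) * E m))
          + ((n+2:ℕ) : ℝ) * E (n+2)) := by
          refine mul_le_mul_of_nonneg_left (add_le_add (Finset.sum_le_sum hchoose) ?_) hlam.le
          rw [hch]
          exact mul_le_mul_of_nonneg_left (pcm_mono n lam hlam.le)
            (by positivity)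
      _ = (((n+2)/2 : ℕ) : ℝ) * (lam * ∑ m ∈ Finset.range (n+1), ((n+1).choose m : ℝ) * E m)
          + ((n+2:ℕ) : ℝ) * lam * E (n+2) := by
          rw [← Finset.mul_sum]
          ring
      _ = (((n+2:ℕ) : ℝ) * lam + (((n+2)/2 : ℕ) : ℝ)) * E (n+2) := by
          rw [← hrec2]
          ring
end

section
/- Let ξ ~ Poisson(λ) with λ > 0 and let ξ̃ = (ξ - λ)/√λ. Then for every even integer 2s ≥ 2, E[ξ̃^{2s} (ξ - λ)²] ≤ 4s(λ + 2s) E[ξ̃^{2s}]. -/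
/-!
Write `X = ξ - λ` and `Mₙ = E[Xⁿ]`. The Stein identity `E[ξ g(ξ)] = λ E[g(ξ + 1)]` gives
`M_{n+1} = λ E[(X + 1)ⁿ - Xⁿ]`. For even `n` the trapezoid bound
`(x + 1)^{n+1} - x^{n+1} ≤ (n + 1)/2 (xⁿ + (x + 1)ⁿ)` holds, so with `n = 2s`
`M_{n+2} ≤ λ (n + 1)/2 E[Xⁿ + (X + 1)ⁿ] = (n + 1)/2 (2λ Mₙ + M_{n+1})`,
using Stein once more. The odd moment is absorbed by AM-GM,
`2(n + 1) M_{n+1} ≤ M_{n+2} + (n + 1)² Mₙ`, leaving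
`3 M_{n+2} ≤ (4(n + 1)λ + (n + 1)²) Mₙ ≤ 12 s (λ + 2s) Mₙ`. Dividing by `λˢ` standardizes.
-/

open Real Finset

lemma pow_sub_pow_mul_pow_sub_pow_nonneg (a b : ℝ) {i j : ℕ} (h : Even (i + j)) :
    0 ≤ (a ^ i - b ^ i) * (a ^ j - b ^ j) := by
  rcases Nat.even_or_odd i with hi | hi
  · have hj : Even j := (Nat.even_add.mp h).mp hi
    rw [← hi.pow_abs a, ← hi.pow_abs b, ← hj.pow_abs a, ← hj.pow_abs b]
    rcases le_total |a| |b| with hab | hab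
    · exact mul_nonneg_of_nonpos_of_nonpos
        (sub_nonpos.mpr (pow_le_pow_left₀ (abs_nonneg a) hab i))
        (sub_nonpos.mpr (pow_le_pow_left₀ (abs_nonneg a) hab j))
    · exact mul_nonneg (sub_nonneg.mpr (pow_le_pow_left₀ (abs_nonneg b) hab i))
        (sub_nonneg.mpr (pow_le_pow_left₀ (abs_nonneg b) hab j))
  · have hj : Odd j := Nat.not_even_iff_odd.mp fun hj =>
      Nat.not_even_iff_odd.mpr hi ((Nat.even_add.mp h).mpr hj)
    rcases le_total a b with hab | hab
    · exact mul_nonneg_of_nonpos_of_nonpos (sub_nonpos.mpr (hi.pow_le_pow.mpr hab))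
        (sub_nonpos.mpr (hj.pow_le_pow.mpr hab))
    · exact mul_nonneg (sub_nonneg.mpr (hi.pow_le_pow.mpr hab))
        (sub_nonneg.mpr (hj.pow_le_pow.mpr hab))

lemma geom_sum₂_le_of_even (a b : ℝ) {n : ℕ} (hn : Even n) :
    ∑ i ∈ range (n + 1), a ^ i * b ^ (n - i) ≤ (n + 1) / 2 * (a ^ n + b ^ n) := by
  have hreflect : ∑ i ∈ range (n + 1), a ^ i * b ^ (n - i)
      = ∑ i ∈ range (n + 1), a ^ (n - i) * b ^ i := by
    rw [← sum_range_reflect]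
    refine sum_congr rfl fun i hi => ?_
    rw [Nat.add_sub_cancel, Nat.sub_sub_self (Nat.lt_succ_iff.mp (mem_range.mp hi)), mul_comm]
  have hpair : ∀ i ∈ range (n + 1),
      a ^ i * b ^ (n - i) + a ^ (n - i) * b ^ i ≤ a ^ n + b ^ n := by
    intro i hi
    have hin : i + (n - i) = n := Nat.add_sub_cancel' (Nat.lt_succ_iff.mp (mem_range.mp hi))
    have := pow_sub_pow_mul_pow_sub_pow_nonneg a b (hin.symm ▸ hn : Even (i + (n - i)))
    have ha : a ^ n = a ^ i * a ^ (n - i) := by rw [← pow_add, hin]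
    have hb : b ^ n = b ^ i * b ^ (n - i) := by rw [← pow_add, hin]
    rw [ha, hb]
    nlinarith
  have := sum_le_sum hpair
  rw [sum_add_distrib, ← hreflect, sum_const, card_range, nsmul_eq_mul] at this
  push_cast at this
  linarith

lemma pow_succ_sub_pow_succ_le_of_even {a b : ℝ} (hab : a ≤ b) {n : ℕ} (hn : Even n) :
    b ^ (n + 1) - a ^ (n + 1) ≤ (n + 1) / 2 * (a ^ n + b ^ n) * (b - a) := by
  rw [← geom_sum₂_mul, Nat.add_sub_cancel]
  exact mul_le_mul_of_nonneg_right
    (by simpa only [add_comm (a ^ n)] using geom_sum₂_le_of_even b a hn) (sub_nonneg.mpr hab)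

noncomputable def poissonWeight (lam : ℝ) (k : ℕ) : ℝ :=
  exp (-lam) * lam ^ k / k.factorial

lemma poissonWeight_nonneg {lam : ℝ} (hlam : 0 ≤ lam) (k : ℕ) :
    0 ≤ poissonWeight lam k := by
  unfold poissonWeight; positivity

lemma succ_mul_poissonWeight_succ (lam : ℝ) (k : ℕ) :
    (k + 1) * poissonWeight lam (k + 1) = lam * poissonWeight lam k := by
  simp only [poissonWeight, Nat.factorial_succ, Nat.cast_mul, pow_succ]
  field_simp
  push_cast
  ring

lemma summable_poissonWeight_mul_add_pow (lam b : ℝ) (n : ℕ) :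
    Summable fun k => poissonWeight lam k * ((k : ℝ) + b) ^ n := by
  refine .of_norm_bounded
    ((summable_pow_div_factorial (exp 1 * |lam|)).mul_left (exp (-lam) * n.factorial * exp |b|))
    fun k => ?_
  have hpow : |(k : ℝ) + b| ^ n ≤ n.factorial * (exp |b| * exp 1 ^ k) := by
    rw [exp_one_pow, ← exp_add, add_comm |b|]
    calc |(k : ℝ) + b| ^ n ≤ ((k : ℝ) + |b|) ^ n :=
          pow_le_pow_left₀ (abs_nonneg _) ((abs_add_le _ _).trans (by simp)) n
      _ ≤ _ := by
        have := pow_div_factorial_le_exp (x := k + |b|) (by positivity) n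
        rw [div_le_iff₀ (by positivity)] at this
        linarith
  rw [norm_mul, norm_pow, Real.norm_eq_abs, Real.norm_eq_abs, poissonWeight, abs_div, abs_mul,
    abs_pow, abs_of_pos (exp_pos _), Nat.abs_cast, mul_pow]
  calc exp (-lam) * |lam| ^ k / k.factorial * |(k : ℝ) + b| ^ n
      ≤ exp (-lam) * |lam| ^ k / k.factorial * (n.factorial * (exp |b| * exp 1 ^ k)) := by
        gcongr
    _ = _ := by ring

lemma hasSum_poissonWeight_mul_nat_mul {lam S : ℝ} {g : ℕ → ℝ}
    (h : HasSum (fun k => poissonWeight lam k * g (k + 1)) S) :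
    HasSum (fun k => poissonWeight lam k * (k * g k)) (lam * S) := by
  have hshift : HasSum (fun k => poissonWeight lam (k + 1) * (((k + 1 : ℕ) : ℝ) * g (k + 1)))
      (lam * S) := by
    refine (h.mul_left lam).congr_fun fun k => ?_
    push_cast
    rw [← mul_assoc, mul_comm _ ((k : ℝ) + 1), succ_mul_poissonWeight_succ, mul_assoc]
  simpa using (hasSum_nat_add_iff (f := fun k => poissonWeight lam k * (k * g k)) 1).mp hshift

/-- `E[(ξ - λ + a)ⁿ]` for `ξ ~ Poisson(λ)`. -/
noncomputable def poissonMoment (lam a : ℝ) (n : ℕ) : ℝ :=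
  ∑' k, poissonWeight lam k * ((k : ℝ) - lam + a) ^ n

lemma hasSum_poissonMoment (lam a : ℝ) (n : ℕ) :
    HasSum (fun k => poissonWeight lam k * ((k : ℝ) - lam + a) ^ n) (poissonMoment lam a n) :=
  ((summable_poissonWeight_mul_add_pow lam (a - lam) n).congr fun k => by ring_nf).hasSum

lemma poissonMoment_nonneg {lam : ℝ} (hlam : 0 ≤ lam) (a : ℝ) {n : ℕ} (hn : Even n) :
    0 ≤ poissonMoment lam a n :=
  tsum_nonneg fun k => mul_nonneg (poissonWeight_nonneg hlam k) (hn.pow_nonneg _)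

lemma poissonMoment_zero_succ (lam : ℝ) (n : ℕ) :
    poissonMoment lam 0 (n + 1) = lam * (poissonMoment lam 1 n - poissonMoment lam 0 n) := by
  have hstein := hasSum_poissonWeight_mul_nat_mul (g := fun k => ((k : ℝ) - lam + 0) ^ n)
    ((hasSum_poissonMoment lam 1 n).congr_fun fun k => by push_cast; ring_nf)
  rw [mul_sub]
  exact (hasSum_poissonMoment lam 0 (n + 1)).unique
    ((hstein.sub ((hasSum_poissonMoment lam 0 n).mul_left lam)).congr_fun fun k => by ring)

lemma poissonMoment_one_sub_le {lam : ℝ} (hlam : 0 ≤ lam) {n : ℕ} (hn : Even n) :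
    poissonMoment lam 1 (n + 1) - poissonMoment lam 0 (n + 1)
      ≤ (n + 1) / 2 * (poissonMoment lam 0 n + poissonMoment lam 1 n) := by
  refine hasSum_le (fun k => ?_)
    ((hasSum_poissonMoment lam 1 (n + 1)).sub (hasSum_poissonMoment lam 0 (n + 1)))
    (((hasSum_poissonMoment lam 0 n).add (hasSum_poissonMoment lam 1 n)).mul_left _)
  have htrap := pow_succ_sub_pow_succ_le_of_even
    (by linarith : (k : ℝ) - lam + 0 ≤ (k : ℝ) - lam + 1) hn
  have := mul_le_mul_of_nonneg_left htrap (poissonWeight_nonneg hlam k)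
  ring_nf at this ⊢
  linarith

lemma two_mul_poissonMoment_succ_le {lam : ℝ} (hlam : 0 ≤ lam) {n : ℕ} (hn : Even n) :
    2 * (n + 1) * poissonMoment lam 0 (n + 1)
      ≤ poissonMoment lam 0 (n + 2) + (n + 1) ^ 2 * poissonMoment lam 0 n := by
  refine hasSum_le (fun k => ?_) ((hasSum_poissonMoment lam 0 (n + 1)).mul_left _)
    ((hasSum_poissonMoment lam 0 (n + 2)).add ((hasSum_poissonMoment lam 0 n).mul_left _))
  have := mul_nonneg (poissonWeight_nonneg hlam k)
    (mul_nonneg (hn.pow_nonneg ((k : ℝ) - lam + 0)) (sq_nonneg ((k : ℝ) - lam - (n + 1))))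
  ring_nf at this ⊢
  linarith

lemma poissonMoment_two_mul_add_two_le {lam : ℝ} (hlam : 0 ≤ lam) {s : ℕ} (hs : 1 ≤ s) :
    poissonMoment lam 0 (2 * s + 2) ≤ 4 * s * (lam + 2 * s) * poissonMoment lam 0 (2 * s) := by
  have hn : Even (2 * s) := even_two_mul s
  have hM := poissonMoment_nonneg hlam 0 hn
  have hstein := poissonMoment_zero_succ lam (2 * s)
  have hupper : poissonMoment lam 0 (2 * s + 2)
      ≤ (2 * s + 1) / 2
        * (2 * lam * poissonMoment lam 0 (2 * s) + poissonMoment lam 0 (2 * s + 1)) := by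
    rw [poissonMoment_zero_succ lam (2 * s + 1)]
    have := mul_le_mul_of_nonneg_left (poissonMoment_one_sub_le hlam hn) hlam
    push_cast at this
    linear_combination this - (2 * (s : ℝ) + 1) / 2 * hstein
  have hamgm := two_mul_poissonMoment_succ_le hlam hn
  push_cast at hamgm
  have hodd_free : 3 * poissonMoment lam 0 (2 * s + 2)
      ≤ (4 * (2 * s + 1) * lam + (2 * s + 1) ^ 2) * poissonMoment lam 0 (2 * s) := by
    linear_combination 4 * hupper + hamgm
  have hcoeff : 4 * (2 * s + 1) * lam + (2 * s + 1) ^ 2 ≤ 3 * (4 * s * (lam + 2 * s)) := by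
    have hs' : (1 : ℝ) ≤ s := by exact_mod_cast hs
    nlinarith
  nlinarith [mul_le_mul_of_nonneg_right hcoeff hM]

/-- For `ξ ~ Poisson(lam)` and `ξ̃ = (ξ - lam)/√lam`:
`E[ξ̃^{2s} (ξ - lam)²] ≤ 4s(lam + 2s) E[ξ̃^{2s}]` for every integer `s ≥ 1`. -/
theorem poisson_standardized_moment_bound (lam : ℝ) (hlam : 0 < lam) (s : ℕ) (hs : 1 ≤ s) :
    ∑' k : ℕ, (Real.exp (-lam) * lam ^ k / Nat.factorial k) *
        (((k : ℝ) - lam) / Real.sqrt lam) ^ (2 * s) * ((k : ℝ) - lam) ^ 2 ≤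
      4 * (s : ℝ) * (lam + 2 * (s : ℝ)) *
        ∑' k : ℕ, (Real.exp (-lam) * lam ^ k / Nat.factorial k) *
          (((k : ℝ) - lam) / Real.sqrt lam) ^ (2 * s) := by
  have hsqrt : √lam ^ (2 * s) = lam ^ s := by rw [pow_mul, sq_sqrt hlam.le]
  have hlhs : ∀ k : ℕ, (exp (-lam) * lam ^ k / k.factorial) *
      (((k : ℝ) - lam) / √lam) ^ (2 * s) * ((k : ℝ) - lam) ^ 2
      = poissonWeight lam k * ((k : ℝ) - lam + 0) ^ (2 * s + 2) / lam ^ s := fun k => by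
    rw [div_pow, hsqrt, add_zero, pow_add, poissonWeight]; ring
  have hrhs : ∀ k : ℕ,
      (exp (-lam) * lam ^ k / k.factorial) * (((k : ℝ) - lam) / √lam) ^ (2 * s)
      = poissonWeight lam k * ((k : ℝ) - lam + 0) ^ (2 * s) / lam ^ s := fun k => by
    rw [div_pow, hsqrt, add_zero, poissonWeight]; ring
  rw [tsum_congr hlhs, tsum_congr hrhs, tsum_div_const, tsum_div_const, mul_div_assoc']
  exact div_le_div_of_nonneg_right (poissonMoment_two_mul_add_two_le hlam.le hs) (by positivity)
end
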